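/- For A, Q, Q_T symmetric matrices with Q, Q_T ⪰ 0 and Z : [0,T] → Sym(k) a nonnegative-definite solution of the Riccati equation Z' + AᵀZ + ZA + Q − Z(BBᵀ − (1/ρ²)σσᵀ)Z = 0 with Z(T) = Q_T, the function v(t,x) = xᵀZ(t)x + ε∫ₜᵀ tr(Z(s)σσᵀ) ds solves the PDE ∂_t v + inf_u { (Ax + Bu)·∂_x v + ‖u‖² + xᵀQx + (ε/2)tr(σσᵀ ∂²_{xx}v) + (ε/(2δ))‖σᵀ∂_x v‖² } = 0 with v(T,x) = xᵀQ_T x, where ρ² = δ/(2ε), and the minimizing control is u*(t,x) = −BᵀZ(t)x. -/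

import Mathlib

open Matrix MeasureTheory

/-!
With `∂ₓv = 2Zx` the Hamiltonian is quadratic in `u`, and completing the square writes it as
`‖u + BᵀZx‖²` plus a remainder free of `u`; so the infimum is attained at `u* = -BᵀZx`.
Evaluating the Riccati equation on `x` shows that `xᵀZ'x` cancels the `x`-dependent part of
that remainder (the identity `1/ρ² = 2ε/δ` turns the risk-sensitive term `‖σᵀ∂ₓv‖²` into
the `Zσσᵀ Z` term of the Riccati equation), while the derivative `-ε tr(Zσσᵀ)` of the
integral cancels the second-order term.
-/

section QuadraticForms

variable {R : Type*} [CommRing R] {n m : Type*} [Fintype n] [Fintype m]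

theorem Matrix.mulVec_dotProduct_eq_dotProduct_transpose_mulVec (B : Matrix n m R)
    (u : m → R) (y : n → R) : B *ᵥ u ⬝ᵥ y = u ⬝ᵥ Bᵀ *ᵥ y := by
  rw [dotProduct_transpose_mulVec, dotProduct_comm]

theorem Matrix.IsSymm.dotProduct_mulVec_comm {Z : Matrix n n R} (hZ : Z.IsSymm) (x y : n → R) :
    x ⬝ᵥ Z *ᵥ y = Z *ᵥ x ⬝ᵥ y := by
  rw [mulVec_dotProduct_eq_dotProduct_transpose_mulVec, hZ.eq]

theorem Matrix.IsSymm.dotProduct_mul_mul_transpose_mul_mulVec {l : Type*} [Fintype l]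
    {Z : Matrix n n R} (hZ : Z.IsSymm) (M : Matrix n l R) (x : n → R) :
    x ⬝ᵥ (Z * (M * Mᵀ) * Z) *ᵥ x = Mᵀ *ᵥ (Z *ᵥ x) ⬝ᵥ Mᵀ *ᵥ (Z *ᵥ x) := by
  rw [← mulVec_mulVec, ← mulVec_mulVec, ← mulVec_mulVec, hZ.dotProduct_mulVec_comm,
    dotProduct_comm, mulVec_dotProduct_eq_dotProduct_transpose_mulVec]

theorem Matrix.IsSymm.dotProduct_riccati_mulVec {Z : Matrix n n R} (hZ : Z.IsSymm)
    (A Q : Matrix n n R) (B : Matrix n m R) (S : Matrix n n R) (c : R) (x : n → R) :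
    x ⬝ᵥ (Aᵀ * Z + Z * A + Q - Z * (B * Bᵀ - c • (S * Sᵀ)) * Z) *ᵥ x =
      2 * (A *ᵥ x ⬝ᵥ Z *ᵥ x) + x ⬝ᵥ Q *ᵥ x - Bᵀ *ᵥ (Z *ᵥ x) ⬝ᵥ Bᵀ *ᵥ (Z *ᵥ x) +
        c * (Sᵀ *ᵥ (Z *ᵥ x) ⬝ᵥ Sᵀ *ᵥ (Z *ᵥ x)) := by
  have hA : x ⬝ᵥ (Aᵀ * Z) *ᵥ x = A *ᵥ x ⬝ᵥ Z *ᵥ x := by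
    rw [← mulVec_mulVec, mulVec_dotProduct_eq_dotProduct_transpose_mulVec]
  have hA' : x ⬝ᵥ (Z * A) *ᵥ x = A *ᵥ x ⬝ᵥ Z *ᵥ x := by
    rw [← mulVec_mulVec, hZ.dotProduct_mulVec_comm, dotProduct_comm]
  have hsplit :
      Z * (B * Bᵀ - c • (S * Sᵀ)) * Z = Z * (B * Bᵀ) * Z - c • (Z * (S * Sᵀ) * Z) := by
    rw [Matrix.mul_sub, mul_smul_comm, Matrix.sub_mul, smul_mul_assoc]
  simp only [hsplit, sub_mulVec, add_mulVec, smul_mulVec, dotProduct_sub, dotProduct_add,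
    dotProduct_smul, smul_eq_mul, hA, hA', hZ.dotProduct_mul_mul_transpose_mul_mulVec]
  ring

end QuadraticForms

section Hamiltonian

variable {n m : Type*} [Fintype n] [Fintype m]

/-- The expression minimised in the HJB equation, with `∂ₓv = 2 Z x` and `∂²ₓₓv = 2 Z`. -/
noncomputable def leqgHamiltonian (A : Matrix n n ℝ) (B : Matrix n m ℝ) (σ Q Z : Matrix n n ℝ)
    (ε δ : ℝ) (x : n → ℝ) (u : m → ℝ) : ℝ :=
  (A *ᵥ x + B *ᵥ u) ⬝ᵥ ((2 : ℝ) • (Z *ᵥ x)) + u ⬝ᵥ u + x ⬝ᵥ Q *ᵥ x +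
    (ε / 2) * trace ((σ * σᵀ) * ((2 : ℝ) • Z)) +
    (ε / (2 * δ)) * (σᵀ *ᵥ ((2 : ℝ) • (Z *ᵥ x)) ⬝ᵥ σᵀ *ᵥ ((2 : ℝ) • (Z *ᵥ x)))

variable (A : Matrix n n ℝ) (B : Matrix n m ℝ) (σ Q Z : Matrix n n ℝ) (ε δ : ℝ) (x : n → ℝ)

theorem leqgHamiltonian_neg_transpose_mulVec :
    leqgHamiltonian A B σ Q Z ε δ x (-(Bᵀ *ᵥ (Z *ᵥ x))) =
      2 * (A *ᵥ x ⬝ᵥ Z *ᵥ x) + x ⬝ᵥ Q *ᵥ x - Bᵀ *ᵥ (Z *ᵥ x) ⬝ᵥ Bᵀ *ᵥ (Z *ᵥ x) +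
        ε * trace (Z * (σ * σᵀ)) + 2 * ε / δ * (σᵀ *ᵥ (Z *ᵥ x) ⬝ᵥ σᵀ *ᵥ (Z *ᵥ x)) := by
  simp only [leqgHamiltonian, add_dotProduct, dotProduct_smul, mulVec_smul, smul_dotProduct,
    mulVec_dotProduct_eq_dotProduct_transpose_mulVec B, neg_dotProduct, dotProduct_neg, neg_neg,
    mul_smul_comm, trace_smul, trace_mul_comm (σ * σᵀ), smul_eq_mul]
  ring

theorem leqgHamiltonian_eq_add_dotProduct_self (u : m → ℝ) :
    leqgHamiltonian A B σ Q Z ε δ x u =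
      leqgHamiltonian A B σ Q Z ε δ x (-(Bᵀ *ᵥ (Z *ᵥ x))) +
        (u + Bᵀ *ᵥ (Z *ᵥ x)) ⬝ᵥ (u + Bᵀ *ᵥ (Z *ᵥ x)) := by
  simp only [leqgHamiltonian, add_dotProduct, dotProduct_add, dotProduct_smul, smul_eq_mul,
    mulVec_dotProduct_eq_dotProduct_transpose_mulVec B, neg_dotProduct, dotProduct_neg,
    dotProduct_comm (Bᵀ *ᵥ (Z *ᵥ x)) u]
  ring

theorem isLeast_range_leqgHamiltonian :
    IsLeast (Set.range (leqgHamiltonian A B σ Q Z ε δ x))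
      (leqgHamiltonian A B σ Q Z ε δ x (-(Bᵀ *ᵥ (Z *ᵥ x)))) := by
  refine ⟨⟨_, rfl⟩, ?_⟩
  rintro _ ⟨u, rfl⟩
  rw [leqgHamiltonian_eq_add_dotProduct_self A B σ Q Z ε δ x u]
  exact le_add_of_nonneg_right (dotProduct_self_star_nonneg _)

end Hamiltonian

section Derivatives

variable {n : Type*} [Fintype n]

theorem hasDerivAt_dotProduct_mulVec {Z : ℝ → Matrix n n ℝ} {Z' : Matrix n n ℝ} {t : ℝ}
    (hZ : ∀ i j, HasDerivAt (fun s => Z s i j) (Z' i j) t) (x : n → ℝ) :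
    HasDerivAt (fun s => x ⬝ᵥ Z s *ᵥ x) (x ⬝ᵥ Z' *ᵥ x) t := by
  simp only [dotProduct, mulVec, Finset.mul_sum]
  exact HasDerivAt.fun_sum fun i _ => HasDerivAt.fun_sum fun j _ =>
    ((hZ i j).mul_const (x j)).const_mul (x i)

theorem Continuous.hasDerivAt_integral_left {f : ℝ → ℝ} (hf : Continuous f) (b t : ℝ) :
    HasDerivAt (fun s => ∫ r in s..b, f r) (-f t) t :=
  intervalIntegral.integral_hasDerivAt_left (hf.intervalIntegrable _ _)
    (hf.stronglyMeasurableAtFilter _ _) hf.continuousAt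

end Derivatives

theorem stmt_15_general {k m : ℕ} (ε δ ρ T : ℝ)
    (hρ : ρ ^ 2 = δ / (2 * ε))
    (A : Matrix (Fin k) (Fin k) ℝ)
    (B : Matrix (Fin k) (Fin m) ℝ) (σ : Matrix (Fin k) (Fin k) ℝ)
    (Q QT : Matrix (Fin k) (Fin k) ℝ)
    (Z : ℝ → Matrix (Fin k) (Fin k) ℝ)
    (hZsymm : ∀ t, (Z t).IsSymm)
    (hric : ∀ (t : ℝ) (i j : Fin k), HasDerivAt (fun s => Z s i j)
      ((-(Aᵀ * Z t + Z t * A + Q -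
          Z t * (B * Bᵀ - (1 / ρ ^ 2) • (σ * σᵀ)) * Z t) : Matrix (Fin k) (Fin k) ℝ) i j) t)
    (hZT : Z T = QT)
    (v : ℝ → (Fin k → ℝ) → ℝ)
    (hv : v = fun t x =>
      x ⬝ᵥ (Z t).mulVec x + ε * ∫ s in t..T, Matrix.trace (Z s * (σ * σᵀ))) :
    let Ham : ℝ → (Fin k → ℝ) → (Fin m → ℝ) → ℝ := fun t x u =>
      (A.mulVec x + B.mulVec u) ⬝ᵥ ((2 : ℝ) • (Z t).mulVec x) + u ⬝ᵥ u +
        x ⬝ᵥ Q.mulVec x + (ε / 2) * Matrix.trace ((σ * σᵀ) * ((2 : ℝ) • Z t)) +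
        (ε / (2 * δ)) * (σᵀ.mulVec ((2 : ℝ) • (Z t).mulVec x) ⬝ᵥ
          σᵀ.mulVec ((2 : ℝ) • (Z t).mulVec x))
    (∀ (t : ℝ) (x : Fin k → ℝ),
      deriv (fun s => v s x) t + sInf (Set.range (Ham t x)) = 0) ∧
    (∀ x : Fin k → ℝ, v T x = x ⬝ᵥ QT.mulVec x) ∧
    (∀ (t : ℝ) (x : Fin k → ℝ),
      IsLeast (Set.range (Ham t x)) (Ham t x (-(Bᵀ.mulVec ((Z t).mulVec x))))) := by
  intro Ham
  have hHam : ∀ t x, Ham t x = leqgHamiltonian A B σ Q (Z t) ε δ x := fun _ _ => rfl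
  have hleast t x := hHam t x ▸ isLeast_range_leqgHamiltonian A B σ Q (Z t) ε δ x
  refine ⟨fun t x => ?_, fun x => by simp [hv, hZT], hleast⟩
  have hZcont : Continuous Z := continuous_pi fun i => continuous_pi fun j =>
    continuous_iff_continuousAt.2 fun s => (hric s i j).continuousAt
  have htrace : Continuous fun s => trace (Z s * (σ * σᵀ)) :=
    (hZcont.mul continuous_const).matrix_trace
  have hv_deriv := (hasDerivAt_dotProduct_mulVec (hric t) x).fun_add
    ((htrace.hasDerivAt_integral_left T t).const_mul ε)
  have hρε : 1 / ρ ^ 2 = 2 * ε / δ := by rw [hρ, one_div_div]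
  simp only [hv]
  rw [hv_deriv.deriv, (hleast t x).csInf_eq, hHam, leqgHamiltonian_neg_transpose_mulVec,
    neg_mulVec, dotProduct_neg, (hZsymm t).dotProduct_riccati_mulVec, hρε]
  ring

theorem stmt_15 {k m : ℕ} (ε δ ρ T : ℝ) (hε : 0 < ε) (hδ : 0 < δ)
    (hρ : ρ ^ 2 = δ / (2 * ε))
    (A : Matrix (Fin k) (Fin k) ℝ) (hA : A.IsSymm)
    (B : Matrix (Fin k) (Fin m) ℝ) (σ : Matrix (Fin k) (Fin k) ℝ)
    (Q QT : Matrix (Fin k) (Fin k) ℝ) (hQ : Q.PosSemidef) (hQT : QT.PosSemidef)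
    (Z : ℝ → Matrix (Fin k) (Fin k) ℝ)
    (hZsymm : ∀ t, (Z t).IsSymm) (hZpsd : ∀ t, (Z t).PosSemidef)
    (hric : ∀ (t : ℝ) (i j : Fin k), HasDerivAt (fun s => Z s i j)
      ((-(Aᵀ * Z t + Z t * A + Q -
          Z t * (B * Bᵀ - (1 / ρ ^ 2) • (σ * σᵀ)) * Z t) : Matrix (Fin k) (Fin k) ℝ) i j) t)
    (hZT : Z T = QT)
    (v : ℝ → (Fin k → ℝ) → ℝ)
    (hv : v = fun t x =>
      x ⬝ᵥ (Z t).mulVec x + ε * ∫ s in t..T, Matrix.trace (Z s * (σ * σᵀ))) :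
    let Ham : ℝ → (Fin k → ℝ) → (Fin m → ℝ) → ℝ := fun t x u =>
      (A.mulVec x + B.mulVec u) ⬝ᵥ ((2 : ℝ) • (Z t).mulVec x) + u ⬝ᵥ u +
        x ⬝ᵥ Q.mulVec x + (ε / 2) * Matrix.trace ((σ * σᵀ) * ((2 : ℝ) • Z t)) +
        (ε / (2 * δ)) * (σᵀ.mulVec ((2 : ℝ) • (Z t).mulVec x) ⬝ᵥ
          σᵀ.mulVec ((2 : ℝ) • (Z t).mulVec x))
    (∀ (t : ℝ) (x : Fin k → ℝ),
      deriv (fun s => v s x) t + sInf (Set.range (Ham t x)) = 0) ∧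
    (∀ x : Fin k → ℝ, v T x = x ⬝ᵥ QT.mulVec x) ∧
    (∀ (t : ℝ) (x : Fin k → ℝ),
      IsLeast (Set.range (Ham t x)) (Ham t x (-(Bᵀ.mulVec ((Z t).mulVec x))))) :=
  stmt_15_general ε δ ρ T hρ A B σ Q QT Z hZsymm hric hZT v hv
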